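/- With P_n = ∏_{i=0}^{n−1}(x − v^{2i+1} − v^{−2i−1}) ∈ ℤ[v,v⁻¹][x], for all m, n ≥ 0: P_m · P_n = Σ_{i=0}^{min(m,n)} ({m}_i · {n}_i · {m+n}_i / {i}!) · P_{m+n−i}, where {a}_i = {a}{a−1}⋯{a−i+1} and {i} = v^i − v^{−i}. -/

import Mathlib

/-- `v`, an indeterminate, as an element of the field `ℚ(v)` of rational functions. -/
noncomputable def vv : RatFunc ℚ := RatFunc.X

/-- The balanced `q`-integer `{m} = v^m - v^{-m}`. -/
noncomputable def bk (m : ℤ) : RatFunc ℚ := vv ^ m - vv ^ (-m)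

/-- The falling product `{a}_i = {a}{a-1}⋯{a-i+1}`. -/
noncomputable def bkp (a : ℤ) (i : ℕ) : RatFunc ℚ := ∏ j ∈ Finset.range i, bk (a - j)

/-- The balanced factorial `{n}! = {n}{n-1}⋯{1}`. -/
noncomputable def bfact (n : ℕ) : RatFunc ℚ := bkp n n

/-- The balanced binomial coefficient `[a choose b] = {a}_b / {b}!`. -/
noncomputable def bbinom (a : ℤ) (b : ℕ) : RatFunc ℚ := bkp a b / bfact b

/-- Chebyshev-type polynomials `V_0 = 1`, `V_1 = x`, `V_n = x V_{n-1} - V_{n-2}`. -/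
noncomputable def chebV : ℕ → Polynomial (RatFunc ℚ)
  | 0 => 1
  | 1 => Polynomial.X
  | (n + 2) => Polynomial.X * chebV (n + 1) - chebV n

/-- `P_n = ∏_{i=0}^{n-1} (x - v^{2i+1} - v^{-2i-1})`. -/
noncomputable def PP (n : ℕ) : Polynomial (RatFunc ℚ) :=
  ∏ i ∈ Finset.range n,
    (Polynomial.X - Polynomial.C (vv ^ (2 * i + 1) + vv ^ (-(2 * (i : ℤ) + 1))))

/-!
Induct on `n`. The roots of `P_n` are `a_k = v^{2k+1} + v^{-2k-1}` and `a_k - a_n = {k+n+1}{k-n}`,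
so `P_k (x - a_n) = P_{k+1} + {k+n+1}{k-n} P_k`. Multiplying the expansion of `P_m P_n` by
`x - a_n` therefore turns the coefficients into those for `n + 1` through a Pascal-type
recursion, which is the identity `{p}{q} = {p-r}{q-r} + {r}{p+q-r}` (both sides equal
`v^{p+q} + v^{-p-q} - v^{p-q} - v^{q-p}`). The terms with `i > min m n` vanish since `{m}_i = 0`
for `i > m`.
-/

open Polynomial

lemma vv_ne_zero : vv ≠ 0 := RatFunc.X_ne_zero

lemma Transcendental.zpow_ne_one {R A : Type*} [CommRing R] [Nontrivial R] [Field A]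
    [Algebra R A] {x : A} (hx : Transcendental R x) {k : ℤ} (hk : k ≠ 0) : x ^ k ≠ 1 := by
  intro h
  have h' : x ^ k.natAbs = 1 := by
    rcases Int.natAbs_eq k with e | e <;> rw [e] at h
    · rwa [zpow_natCast] at h
    · rwa [zpow_neg, inv_eq_one, zpow_natCast] at h
  exact hx (IsAlgebraic.of_pow (Int.natAbs_pos.2 hk) (h' ▸ isAlgebraic_one))

lemma RatFunc.X_zpow_ne_one {K : Type*} [Field K] {k : ℤ} (hk : k ≠ 0) :
    (RatFunc.X : RatFunc K) ^ k ≠ 1 :=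
  RatFunc.transcendental_X.zpow_ne_one hk

lemma bk_ne_zero {k : ℤ} (hk : k ≠ 0) : bk k ≠ 0 := by
  intro h
  have hsq : vv ^ (k + k) = 1 := by
    rw [zpow_add₀ vv_ne_zero]
    nth_rw 1 [sub_eq_zero.mp h]
    rw [← zpow_add₀ vv_ne_zero, neg_add_cancel, zpow_zero]
  exact RatFunc.X_zpow_ne_one (by omega) hsq

noncomputable def vsym (a : ℤ) : RatFunc ℚ := vv ^ a + vv ^ (-a)

lemma vsym_neg (a : ℤ) : vsym (-a) = vsym a := by
  rw [vsym, vsym, neg_neg, add_comm]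

lemma bk_mul_bk (a b : ℤ) : bk a * bk b = vsym (a + b) - vsym (a - b) := by
  simp only [bk, vsym, zpow_neg, zpow_add₀ vv_ne_zero, zpow_sub₀ vv_ne_zero]
  have := zpow_ne_zero a vv_ne_zero
  have := zpow_ne_zero b vv_ne_zero
  field_simp
  ring

lemma bk_mul (p q r : ℤ) : bk p * bk q = bk (p - r) * bk (q - r) + bk r * bk (p + q - r) := by
  simp only [bk_mul_bk]
  rw [show p - r + (q - r) = -(r - (p + q - r)) by ring, vsym_neg,
    show r + (p + q - r) = p + q by ring, show p - r - (q - r) = p - q by ring]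
  ring

lemma bkp_zero (a : ℤ) : bkp a 0 = 1 := Finset.prod_range_zero _

lemma bkp_succ (a : ℤ) (i : ℕ) : bkp a (i + 1) = bkp a i * bk (a - i) :=
  Finset.prod_range_succ _ _

lemma bkp_add_one_succ (a : ℤ) (i : ℕ) : bkp (a + 1) (i + 1) = bk (a + 1) * bkp a i := by
  rw [bkp, Finset.prod_range_succ', mul_comm, Nat.cast_zero, sub_zero, bkp]
  congr 1
  refine Finset.prod_congr rfl fun j _ => ?_
  push_cast
  ring_nf

lemma bkp_natCast_eq_zero {a i : ℕ} (h : a < i) : bkp a i = 0 :=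
  Finset.prod_eq_zero (Finset.mem_range.mpr h) (by rw [sub_self, bk, neg_zero, sub_self])

lemma bfact_succ (i : ℕ) : bfact (i + 1) = bk ((i : ℤ) + 1) * bfact i := by
  rw [bfact, bfact, Nat.cast_succ, bkp_add_one_succ]

lemma bfact_ne_zero (n : ℕ) : bfact n ≠ 0 := by
  rw [bfact, bkp, Finset.prod_ne_zero_iff]
  exact fun _ hj => bk_ne_zero (by rw [Finset.mem_range] at hj; omega)

noncomputable def prodCoeff (m n i : ℕ) : RatFunc ℚ :=
  bkp (m : ℤ) i * bkp (n : ℤ) i * bkp ((m : ℤ) + n) i / bfact i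

lemma prodCoeff_zero (m n : ℕ) : prodCoeff m n 0 = 1 := by
  simp [prodCoeff, bkp_zero, bfact]

lemma prodCoeff_eq_zero_of_left_lt {m n i : ℕ} (h : m < i) : prodCoeff m n i = 0 := by
  rw [prodCoeff, bkp_natCast_eq_zero h, zero_mul, zero_mul, zero_div]

lemma prodCoeff_eq_zero_of_right_lt {m n i : ℕ} (h : n < i) : prodCoeff m n i = 0 := by
  rw [prodCoeff, bkp_natCast_eq_zero h, mul_zero, zero_mul, zero_div]

lemma prodCoeff_succ_succ (m n i : ℕ) :
    prodCoeff m (n + 1) (i + 1) =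
      prodCoeff m n (i + 1) +
        prodCoeff m n i * (bk ((m : ℤ) + 2 * n + 1 - i) * bk ((m : ℤ) - i)) := by
  have hb := bk_mul ((n : ℤ) + 1) ((m : ℤ) + n + 1) ((i : ℤ) + 1)
  have := bfact_ne_zero i
  have := bk_ne_zero (show (i : ℤ) + 1 ≠ 0 by omega)
  simp only [prodCoeff, bfact_succ, bkp_succ (m : ℤ) i, Nat.cast_succ, ← add_assoc,
    bkp_add_one_succ, bkp_succ (n : ℤ) i, bkp_succ ((m : ℤ) + n) i]
  rw [show (n : ℤ) + 1 - (i + 1) = n - i by ring,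
    show (m : ℤ) + n + 1 - (i + 1) = m + n - i by ring,
    show (n : ℤ) + 1 + (m + n + 1) - (i + 1) = m + 2 * n + 1 - i by ring] at hb
  field_simp
  linear_combination
    (bkp (m : ℤ) i * bk ((m : ℤ) - i) * bkp (n : ℤ) i * bkp ((m : ℤ) + n) i) * hb

lemma PP_zero : PP 0 = 1 := Finset.prod_range_zero _

lemma PP_succ (k : ℕ) : PP (k + 1) = PP k * (X - C (vsym (2 * k + 1))) := by
  rw [PP, Finset.prod_range_succ, vsym, ← zpow_natCast]
  push_cast
  rfl

lemma PP_mul_X_sub_C (k n : ℕ) :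
    PP k * (X - C (vsym (2 * n + 1))) =
      PP (k + 1) + C (bk ((k : ℤ) + n + 1) * bk ((k : ℤ) - n)) * PP k := by
  rw [PP_succ, bk_mul_bk, show (k : ℤ) + n + 1 + (k - n) = 2 * k + 1 by ring,
    show (k : ℤ) + n + 1 - (k - n) = 2 * n + 1 by ring, map_sub]
  ring

lemma PP_sub_mul_X_sub_C {m n i : ℕ} (hi : i ≤ n) :
    PP (m + n - i) * (X - C (vsym (2 * n + 1))) =
      PP (m + n + 1 - i) +
        C (bk ((m : ℤ) + 2 * n + 1 - i) * bk ((m : ℤ) - i)) * PP (m + n - i) := by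
  rw [PP_mul_X_sub_C, show ((m + n - i : ℕ) : ℤ) + n + 1 = m + 2 * n + 1 - i by omega,
    show ((m + n - i : ℕ) : ℤ) - n = m - i by omega,
    show m + n - i + 1 = m + n + 1 - i by omega]

lemma PP_mul_PP_eq_sum (m n : ℕ) :
    PP m * PP n = ∑ i ∈ Finset.range (n + 1), C (prodCoeff m n i) * PP (m + n - i) := by
  induction n with
  | zero => rw [PP_zero, mul_one, Finset.sum_range_one, prodCoeff_zero, map_one, one_mul]; rfl
  | succ n ih =>
    have hshift : ∑ i ∈ Finset.range (n + 1), C (prodCoeff m n i) * PP (m + n + 1 - i) =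
        ∑ i ∈ Finset.range (n + 1), C (prodCoeff m n (i + 1)) * PP (m + n - i) +
          PP (m + n + 1) := by
      have htop : C (prodCoeff m n (n + 1)) * PP (m + n + 1 - (n + 1)) = 0 := by
        rw [prodCoeff_eq_zero_of_right_lt (Nat.lt_add_one n), map_zero, zero_mul]
      rw [← add_zero (Finset.sum _ _), ← htop, ← Finset.sum_range_succ,
        Finset.sum_range_succ', prodCoeff_zero, map_one, one_mul, Nat.sub_zero]
      simp only [Nat.add_sub_add_right]
    calc PP m * PP (n + 1)
        = (∑ i ∈ Finset.range (n + 1), C (prodCoeff m n i) * PP (m + n - i)) *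
            (X - C (vsym (2 * n + 1))) := by rw [PP_succ, ← mul_assoc, ih]
      _ = ∑ i ∈ Finset.range (n + 1), (C (prodCoeff m n i) * PP (m + n + 1 - i) +
            C (prodCoeff m n i * (bk ((m : ℤ) + 2 * n + 1 - i) * bk ((m : ℤ) - i))) *
              PP (m + n - i)) := by
        rw [Finset.sum_mul]
        refine Finset.sum_congr rfl fun i hi => ?_
        rw [mul_assoc, PP_sub_mul_X_sub_C (Nat.lt_succ_iff.mp (Finset.mem_range.mp hi))]
        simp only [map_mul]
        ring
      _ = ∑ i ∈ Finset.range (n + 1 + 1), C (prodCoeff m (n + 1) i) * PP (m + n + 1 - i) := by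
        rw [Finset.sum_add_distrib, hshift,
          Finset.sum_range_succ' (fun i => C (prodCoeff m (n + 1) i) * PP (m + n + 1 - i)),
          prodCoeff_zero, map_one, one_mul, Nat.sub_zero]
        simp only [prodCoeff_succ_succ, map_add, add_mul, Finset.sum_add_distrib,
          Nat.add_sub_add_right]
        ring

theorem stmt5 (m n : ℕ) :
    PP m * PP n = ∑ i ∈ Finset.range (min m n + 1),
      Polynomial.C (bkp (m : ℤ) i * bkp (n : ℤ) i * bkp ((m : ℤ) + n) i / bfact i) *
        PP (m + n - i) := by
  rw [PP_mul_PP_eq_sum m n]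
  refine (Finset.sum_subset (Finset.range_subset_range.mpr (by omega)) fun i hi hni => ?_).symm
  rw [Finset.mem_range] at hi hni
  rw [prodCoeff_eq_zero_of_left_lt (by omega), map_zero, zero_mul]
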